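/- arXiv:2110.09752 — 2 statements merged into one kernel-verified Lean document; each statement's English description precedes it below -/
import Mathlib

section
/- Let n ≥ 1 and let f ∈ 𝓢(ℝⁿ, ℂ) be a Schwartz function satisfying H₀ f = −(n/2)·f, i.e. (1/2) Σ_{j=1}^n (∂²f/∂x_j²(x) − x_j² f(x)) = −(n/2)·f(x) for all x. Then f(x) = f(0)·e^(−|x|²/2) for all x ∈ ℝⁿ; that is, the lowest eigenspace of the Hamilton operator in the Schwartz space is spanned by the Gaussian. -/
open MeasureTheory

/-- One-dimensional Hermite function `h_ℓ(t) = e^{t²/2} (d/dt)^ℓ (e^{-t²})`. -/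
noncomputable def hermiteFun (ℓ : ℕ) (t : ℝ) : ℝ :=
  Real.exp (t ^ 2 / 2) * iteratedDeriv ℓ (fun s => Real.exp (-s ^ 2)) t

/-- First partial derivative `∂f/∂x_j` along the `j`-th coordinate. -/
noncomputable def partialDeriv1 (n : ℕ) (j : Fin n) (f : (Fin n → ℝ) → ℂ)
    (x : Fin n → ℝ) : ℂ :=
  deriv (fun t => f (Function.update x j t)) (x j)

/-- Second partial derivative `∂²f/∂x_j²` along the `j`-th coordinate. -/
noncomputable def partialDeriv2 (n : ℕ) (j : Fin n) (f : (Fin n → ℝ) → ℂ)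
    (x : Fin n → ℝ) : ℂ :=
  iteratedDeriv 2 (fun t => f (Function.update x j t)) (x j)

/-- Symplectic Clifford multiplication `σ(v)f` for `v = (v′, v″) ∈ ℝ^{2n}`:
`(σ(v)f)(x) = i (∑ⱼ v′ⱼ xⱼ) f(x) + ∑ⱼ v″ⱼ ∂f/∂xⱼ(x)`. -/
noncomputable def sclMul (n : ℕ) (v : (Fin n → ℝ) × (Fin n → ℝ)) (f : (Fin n → ℝ) → ℂ)
    (x : Fin n → ℝ) : ℂ :=
  Complex.I * (↑(∑ j, v.1 j * x j) : ℂ) * f x + ∑ j, (↑(v.2 j) : ℂ) * partialDeriv1 n j f x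

/-- The standard symplectic form `ω₀` on `ℝ^{2n}`. -/
def omega0 (n : ℕ) (v w : (Fin n → ℝ) × (Fin n → ℝ)) : ℝ :=
  ∑ j, (v.1 j * w.2 j - v.2 j * w.1 j)

/-- The Hamilton operator `H₀ f = (1/2) ∑ⱼ (∂²f/∂xⱼ² − xⱼ² f)`. -/
noncomputable def hamOp (n : ℕ) (f : (Fin n → ℝ) → ℂ) (x : Fin n → ℝ) : ℂ :=
  (1 / 2 : ℂ) * ∑ j, (partialDeriv2 n j f x - (↑(x j) : ℂ) ^ 2 * f x)

/-- The `n`-dimensional Hermite function `h_β(x) = h_{β₁}(x₁) ⋯ h_{βₙ}(xₙ)`. -/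
noncomputable def hermiteMulti (n : ℕ) (β : Fin n → ℕ) (x : Fin n → ℝ) : ℝ :=
  ∏ j, hermiteFun (β j) (x j)

/-- The standard complex structure `J₀(v′, v″) = (−v″, v′)` on `ℝ^{2n}`. -/
def J0 (n : ℕ) (v : (Fin n → ℝ) × (Fin n → ℝ)) : (Fin n → ℝ) × (Fin n → ℝ) :=
  (fun j => -v.2 j, v.1)

/-!
With the annihilation operators `a_j = ∂_j + x_j` and their formal adjoints `a_j† = x_j - ∂_j`
one has `a_j† a_j = x_j² - ∂_j² - 1`, so `H₀ = -(∑_j a_j† a_j + n) / 2`. Hence `H₀ f = -(n/2) f`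
says `∑_j a_j† a_j f = 0`, and pairing with `f` and integrating by parts gives
`∑_j ‖a_j f‖²_{L²} = 0`. So `∂_j f = -x_j f` for every `j`, and along each ray `t ↦ t • x` this
linear ODE integrates to the Gaussian.
-/

open SchwartzMap LineDeriv
open scoped LineDeriv InnerProductSpace

local notation "∂[" j "]" => lineDerivOp (Pi.single (M := fun _ ↦ ℝ) j 1)

theorem eq_exp_smul_of_hasDerivAt {F : Type*} [NormedAddCommGroup F] [NormedSpace ℝ F]
    {γ : ℝ → F} {c : ℝ} (hγ : ∀ t, HasDerivAt γ (-(t * c) • γ t) t) :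
    γ 1 = Real.exp (-c / 2) • γ 0 := by
  let ψ : ℝ → F := fun t => Real.exp (t ^ 2 * c / 2) • γ t
  have hψ (t : ℝ) : HasDerivAt ψ 0 t := by
    have hexp : HasDerivAt (fun s : ℝ => Real.exp (s ^ 2 * c / 2))
        (Real.exp (t ^ 2 * c / 2) * (t * c)) t := by
      convert ((hasDerivAt_pow 2 t).mul_const c).div_const 2 |>.exp using 1
      ring
    refine (hexp.fun_smul (hγ t)).congr_deriv ?_
    rw [smul_smul, ← add_smul]
    ring_nf
    simp
  have hconst : ψ 1 = ψ 0 :=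
    is_const_of_deriv_eq_zero (fun t => (hψ t).differentiableAt) (fun t => (hψ t).deriv) 1 0
  calc γ 1 = Real.exp (-c / 2) • ψ 1 := by simp [ψ, smul_smul, ← Real.exp_add, neg_div]
    _ = Real.exp (-c / 2) • γ 0 := by simp [hconst, ψ]

namespace SchwartzMap

section NormedSpace

variable {ι F : Type*} [Fintype ι] [NormedAddCommGroup F] [NormedSpace ℝ F]

noncomputable def coordMulCLM (j : ι) : 𝓢(ι → ℝ, F) →L[ℝ] 𝓢(ι → ℝ, F) :=
  smulLeftCLM F (fun x : ι → ℝ => x j)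

@[simp]
theorem coordMulCLM_apply (j : ι) (f : 𝓢(ι → ℝ, F)) (x : ι → ℝ) :
    coordMulCLM j f x = x j • f x :=
  smulLeftCLM_apply_apply
    (ContinuousLinearMap.proj (R := ℝ) (φ := fun _ : ι => ℝ) j).hasTemperateGrowth f x

variable [DecidableEq ι]

theorem lineDerivOp_coordMulCLM (j : ι) (f : 𝓢(ι → ℝ, F)) (x : ι → ℝ) :
    ∂[j] (coordMulCLM j f) x = x j • ∂[j] f x + f x := by
  have hcoord : HasFDerivAt (fun y : ι → ℝ => y j) (ContinuousLinearMap.proj j) x :=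
    (ContinuousLinearMap.proj (R := ℝ) (φ := fun _ : ι => ℝ) j).hasFDerivAt
  rw [lineDerivOp_apply_eq_fderiv, lineDerivOp_apply_eq_fderiv,
    show ⇑(coordMulCLM j f) = fun y => y j • f y from funext (coordMulCLM_apply j f),
    (hcoord.fun_smul (f.hasFDerivAt x)).fderiv]
  simp

theorem lineDerivOp_eq_sum_smul (f : 𝓢(ι → ℝ, F)) (v : ι → ℝ) :
    ∂_{v} f = ∑ j, v j • ∂[j] f := by
  have hsingle (j : ι) : Pi.single j (v j) = v j • Pi.single (M := fun _ ↦ ℝ) j 1 := by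
    rw [← Pi.single_smul', smul_eq_mul, mul_one]
  conv_lhs => rw [← Finset.univ_sum_single v]
  simp_rw [hsingle, lineDerivOp_left_sum, lineDerivOp_left_smul]

theorem hasDerivAt_comp_update (f : 𝓢(ι → ℝ, F)) (x : ι → ℝ) (j : ι) (t : ℝ) :
    HasDerivAt (fun s => f (Function.update x j s)) (∂[j] f (Function.update x j t)) t :=
  (f.hasFDerivAt _).comp_hasDerivAt t (hasDerivAt_update x j t)

end NormedSpace

variable {ι F : Type*} [Fintype ι] [NormedAddCommGroup F] [InnerProductSpace ℝ F]

theorem integrable_inner (f g : 𝓢(ι → ℝ, F)) : Integrable (fun x => ⟪f x, g x⟫_ℝ) :=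
  (pairing (innerSL ℝ) f g).integrable

theorem eq_zero_of_integral_norm_sq_eq_zero {f : 𝓢(ι → ℝ, F)} (h : ∫ x, ‖f x‖ ^ 2 = 0) :
    f = 0 := by
  have hint : Integrable (fun x => ‖f x‖ ^ 2) := by
    simpa only [real_inner_self_eq_norm_sq] using integrable_inner f f
  have hae := (integral_eq_zero_iff_of_nonneg (fun x => by positivity) hint).1 h
  have hcont : Continuous (fun x => ‖f x‖ ^ 2) := by fun_prop
  ext x
  have hx : ‖f x‖ ^ 2 = 0 := congrFun ((hcont.ae_eq_iff_eq volume continuous_const).1 hae) x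
  rw [zero_apply, ← norm_eq_zero, ← sq_eq_zero_iff, hx]

end SchwartzMap

section NormedSpace

variable {ι F : Type*} [Fintype ι] [DecidableEq ι] [NormedAddCommGroup F] [NormedSpace ℝ F]

noncomputable def annihilationOp (j : ι) (f : 𝓢(ι → ℝ, F)) : 𝓢(ι → ℝ, F) :=
  ∂[j] f + coordMulCLM j f

noncomputable def creationOp (j : ι) (f : 𝓢(ι → ℝ, F)) : 𝓢(ι → ℝ, F) :=
  coordMulCLM j f - ∂[j] f

theorem annihilationOp_apply (j : ι) (f : 𝓢(ι → ℝ, F)) (x : ι → ℝ) :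
    annihilationOp j f x = ∂[j] f x + x j • f x := by
  simp [annihilationOp]

theorem creationOp_annihilationOp_apply (j : ι) (f : 𝓢(ι → ℝ, F)) (x : ι → ℝ) :
    creationOp j (annihilationOp j f) x = (x j) ^ 2 • f x - ∂[j] (∂[j] f) x - f x := by
  rw [creationOp, sub_apply, coordMulCLM_apply, annihilationOp_apply, annihilationOp,
    lineDerivOp_add, add_apply, lineDerivOp_coordMulCLM]
  module

theorem eq_gaussian_smul_of_annihilationOp_eq_zero (f : 𝓢(ι → ℝ, F))
    (h : ∀ j, annihilationOp j f = 0) (x : ι → ℝ) :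
    f x = Real.exp (-(∑ j, x j ^ 2) / 2) • f 0 := by
  have hpartial (j : ι) (y : ι → ℝ) : ∂[j] f y = -(y j • f y) := by
    rw [← sub_eq_zero, sub_neg_eq_add, ← annihilationOp_apply, h, zero_apply]
  have hray (t : ℝ) :
      HasDerivAt (fun s : ℝ => f (s • x)) (-(t * ∑ j, x j ^ 2) • f (t • x)) t := by
    refine ((f.hasFDerivAt (t • x)).comp_hasDerivAt t
      ((hasDerivAt_id' t).smul_const x)).congr_deriv ?_
    rw [one_smul, ← lineDerivOp_apply_eq_fderiv, lineDerivOp_eq_sum_smul, sum_apply]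
    simp only [smul_apply, hpartial, Pi.smul_apply, smul_eq_mul, smul_neg, smul_smul,
      Finset.mul_sum, Finset.sum_smul, ← Finset.sum_neg_distrib, neg_smul]
    refine Finset.sum_congr rfl fun j _ => ?_
    ring_nf
  simpa using eq_exp_smul_of_hasDerivAt hray

end NormedSpace

section InnerProductSpace

variable {ι F : Type*} [Fintype ι] [DecidableEq ι] [NormedAddCommGroup F] [InnerProductSpace ℝ F]

theorem integral_inner_creationOp (j : ι) (f g : 𝓢(ι → ℝ, F)) :
    ∫ x, ⟪f x, creationOp j g x⟫_ℝ = ∫ x, ⟪annihilationOp j f x, g x⟫_ℝ := by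
  have hibp : ∫ x, ⟪f x, ∂[j] g x⟫_ℝ = -∫ x, ⟪∂[j] f x, g x⟫_ℝ :=
    integral_bilinear_lineDerivOp_right_eq_neg_left f g (innerSL ℝ) _
  have hmove (x : ι → ℝ) : ⟪f x, coordMulCLM j g x⟫_ℝ = ⟪coordMulCLM j f x, g x⟫_ℝ := by
    rw [coordMulCLM_apply, coordMulCLM_apply, real_inner_smul_left, real_inner_smul_right]
  simp only [creationOp, annihilationOp, sub_apply, add_apply, inner_sub_right, inner_add_left,
    hmove]
  rw [integral_sub (integrable_inner _ _) (integrable_inner f _),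
    integral_add (integrable_inner _ g) (integrable_inner _ g), hibp]
  ring

theorem annihilationOp_eq_zero_of_sum_creationOp_annihilationOp_eq_zero (f : 𝓢(ι → ℝ, F))
    (h : ∑ j, creationOp j (annihilationOp j f) = 0) (j : ι) : annihilationOp j f = 0 := by
  have hsum : ∑ j, ∫ x, ‖annihilationOp j f x‖ ^ 2 = 0 :=
    calc ∑ j, ∫ x, ‖annihilationOp j f x‖ ^ 2
        = ∑ j, ∫ x, ⟪f x, creationOp j (annihilationOp j f) x⟫_ℝ := by
          simp_rw [integral_inner_creationOp, real_inner_self_eq_norm_sq]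
      _ = ∫ x, ⟪f x, (∑ j, creationOp j (annihilationOp j f)) x⟫_ℝ := by
          simp_rw [sum_apply, inner_sum]
          exact (integral_finsetSum _ fun j _ => integrable_inner _ _).symm
      _ = 0 := by simp [h]
  exact eq_zero_of_integral_norm_sq_eq_zero <|
    (Finset.sum_eq_zero_iff_of_nonneg fun j _ => integral_nonneg fun x => by positivity).1 hsum j
      (Finset.mem_univ j)

end InnerProductSpace

theorem partialDeriv2_eq_lineDerivOp {n : ℕ} (f : 𝓢(Fin n → ℝ, ℂ)) (j : Fin n)
    (x : Fin n → ℝ) : partialDeriv2 n j f x = ∂[j] (∂[j] f) x := by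
  have hderiv : deriv (fun t => f (Function.update x j t))
      = fun t => ∂[j] f (Function.update x j t) :=
    funext fun t => (hasDerivAt_comp_update f x j t).deriv
  rw [partialDeriv2, iteratedDeriv_succ', iteratedDeriv_one, hderiv,
    (hasDerivAt_comp_update (∂[j] f) x j (x j)).deriv, Function.update_eq_self]

theorem hamOp_eq_neg_sum_creationOp_annihilationOp {n : ℕ} (f : 𝓢(Fin n → ℝ, ℂ))
    (x : Fin n → ℝ) :
    hamOp n f x = -((∑ j, creationOp j (annihilationOp j f)) x + n * f x) / 2 := by
  simp only [hamOp, partialDeriv2_eq_lineDerivOp, sum_apply, creationOp_annihilationOp_apply,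
    Complex.real_smul, Finset.sum_sub_distrib, Finset.sum_const, Finset.card_univ,
    Fintype.card_fin, nsmul_eq_mul]
  push_cast
  ring

theorem hamOp_lowest_eigenspace_general (n : ℕ) (f : SchwartzMap (Fin n → ℝ) ℂ)
    (h : ∀ x : Fin n → ℝ, hamOp n ⇑f x = -((n : ℂ) / 2) * f x) :
    ∀ x : Fin n → ℝ, f x = f 0 * Complex.exp (-(↑(∑ j, (x j) ^ 2) : ℂ) / 2) := by
  have hnumber : ∑ j, creationOp j (annihilationOp j f) = 0 := by
    ext x
    have hx := h x
    rw [hamOp_eq_neg_sum_creationOp_annihilationOp] at hx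
    rw [zero_apply]
    linear_combination -2 * hx
  intro x
  rw [eq_gaussian_smul_of_annihilationOp_eq_zero f
    (annihilationOp_eq_zero_of_sum_creationOp_annihilationOp_eq_zero f hnumber) x,
    Complex.real_smul, mul_comm]
  push_cast
  ring

/-- the lowest eigenspace of the Hamilton operator in the Schwartz space is
spanned by the Gaussian: if `H₀ f = −(n/2) f` then `f(x) = f(0) e^{−|x|²/2}`. -/
theorem hamOp_lowest_eigenspace (n : ℕ) (hn : 1 ≤ n) (f : SchwartzMap (Fin n → ℝ) ℂ)
    (h : ∀ x : Fin n → ℝ, hamOp n ⇑f x = -((n : ℂ) / 2) * f x) :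
    ∀ x : Fin n → ℝ, f x = f 0 * Complex.exp (-(↑(∑ j, (x j) ^ 2) : ℂ) / 2) :=
  hamOp_lowest_eigenspace_general n f h
end

section
/- Let n ≥ 1, let f : ℝⁿ → ℂ be a Schwartz function, and let v ∈ ℝ^(2n). Then H₀(σ(v)f) = σ(v)(H₀ f) + i·σ(J₀ v) f; that is, the commutator of the Hamilton operator with the symplectic Clifford multiplication by v is i times the symplectic Clifford multiplication by J₀v. -/
open MeasureTheory

/-!
On `C³` functions the Hamilton operator obeys the canonical commutation relations
`[H₀, xⱼ] = ∂ⱼ` (Leibniz rule) and `[H₀, ∂ⱼ] = xⱼ` (which also uses that `∂ⱼ` commutes with `∂ₖ²`).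
Since `σ(v) = i ∑ⱼ v′ⱼ xⱼ + ∑ⱼ v″ⱼ ∂ⱼ` is a linear combination of these generators,
`[H₀, σ(v)] = i ∑ⱼ v′ⱼ ∂ⱼ + ∑ⱼ v″ⱼ xⱼ`, and this is `i σ(J₀ v)`.
-/

variable {n : ℕ} {f g : (Fin n → ℝ) → ℂ}

def coordFun (j : Fin n) : (Fin n → ℝ) → ℂ := fun x => x j

@[simp] lemma coordFun_apply (j : Fin n) (x : Fin n → ℝ) : coordFun j x = x j := rfl

lemma contDiff_coordFun (j : Fin n) {m : WithTop ℕ∞} : ContDiff ℝ m (coordFun j) :=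
  Complex.ofRealCLM.contDiff.comp (contDiff_apply ℝ ℝ j)

lemma differentiable_coordFun (j : Fin n) : Differentiable ℝ (coordFun j) :=
  (contDiff_coordFun j (m := 1)).differentiable one_ne_zero

lemma partialDeriv1_eq_lineDeriv (j : Fin n) (x : Fin n → ℝ) :
    partialDeriv1 n j f x = lineDeriv ℝ f x (Pi.single j 1) := by
  have hline : ∀ t : ℝ, Function.update x j (t + x j) = x + t • Pi.single j 1 := by
    intro t
    ext i
    rcases eq_or_ne i j with rfl | h
    · simp [add_comm]
    · simp [h]
  simp only [partialDeriv1, lineDeriv, ← hline]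
  rw [deriv_comp_add_const (f := fun t => f (Function.update x j t)), zero_add]

lemma partialDeriv1_eq_fderiv (hf : Differentiable ℝ f) (j : Fin n) :
    partialDeriv1 n j f = fun x => fderiv ℝ f x (Pi.single j 1) := by
  funext x
  rw [partialDeriv1_eq_lineDeriv, (hf x).lineDeriv_eq_fderiv]

lemma partialDeriv2_eq (j : Fin n) :
    partialDeriv2 n j f = partialDeriv1 n j (partialDeriv1 n j f) := by
  funext x
  have hslice : deriv (fun t => f (Function.update x j t))
      = fun s => partialDeriv1 n j f (Function.update x j s) := by
    funext s
    simp [partialDeriv1]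
  rw [partialDeriv2, iteratedDeriv_succ, iteratedDeriv_one, hslice]
  simp [partialDeriv1]

lemma contDiff_partialDeriv1 {m k : WithTop ℕ∞} (hf : ContDiff ℝ k f) (hmk : m + 1 ≤ k)
    (j : Fin n) : ContDiff ℝ m (partialDeriv1 n j f) := by
  rw [partialDeriv1_eq_fderiv (hf.differentiable (ne_bot_of_le_ne_bot (by simp) hmk))]
  exact (hf.fderiv_right hmk).clm_apply contDiff_const

lemma differentiable_partialDeriv1 (hf : ContDiff ℝ 2 f) (j : Fin n) :
    Differentiable ℝ (partialDeriv1 n j f) :=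
  (contDiff_partialDeriv1 hf (m := 1) (by norm_num) j).differentiable one_ne_zero

lemma partialDeriv1_comm (hf : ContDiff ℝ 2 f) (j k : Fin n) :
    partialDeriv1 n j (partialDeriv1 n k f) = partialDeriv1 n k (partialDeriv1 n j f) := by
  have hd : Differentiable ℝ (fderiv ℝ f) :=
    (hf.fderiv_right (m := 1) le_rfl).differentiable one_ne_zero
  have hdf := hf.differentiable two_ne_zero
  have hsecond : ∀ i l, partialDeriv1 n i (partialDeriv1 n l f)
      = fun x => fderiv ℝ (fderiv ℝ f) x (Pi.single i 1) (Pi.single l 1) := by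
    intro i l
    funext x
    rw [partialDeriv1_eq_fderiv hdf, partialDeriv1_eq_lineDeriv,
      DifferentiableAt.lineDeriv_eq_fderiv (by fun_prop),
      fderiv_clm_apply (hd x) (differentiableAt_const _)]
    simp
  rw [hsecond, hsecond]
  funext x
  exact (hf.contDiffAt.isSymmSndFDerivAt (by simp)).eq _ _

lemma partialDeriv1_const_smul (hf : Differentiable ℝ f) (j : Fin n) (c : ℂ) :
    partialDeriv1 n j (c • f) = c • partialDeriv1 n j f := by
  rw [partialDeriv1_eq_fderiv hf, partialDeriv1_eq_fderiv (hf.const_smul c)]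
  funext x
  simp [fderiv_const_smul (hf x)]

lemma partialDeriv1_add (hf : Differentiable ℝ f) (hg : Differentiable ℝ g) (j : Fin n) :
    partialDeriv1 n j (f + g) = partialDeriv1 n j f + partialDeriv1 n j g := by
  rw [partialDeriv1_eq_fderiv hf, partialDeriv1_eq_fderiv hg, partialDeriv1_eq_fderiv (hf.add hg)]
  funext x
  simp [fderiv_add (hf x) (hg x)]

lemma partialDeriv1_sub (hf : Differentiable ℝ f) (hg : Differentiable ℝ g) (j : Fin n) :
    partialDeriv1 n j (f - g) = partialDeriv1 n j f - partialDeriv1 n j g := by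
  rw [partialDeriv1_eq_fderiv hf, partialDeriv1_eq_fderiv hg, partialDeriv1_eq_fderiv (hf.sub hg)]
  funext x
  simp [fderiv_sub (hf x) (hg x)]

lemma partialDeriv1_mul (hf : Differentiable ℝ f) (hg : Differentiable ℝ g) (j : Fin n) :
    partialDeriv1 n j (f * g) = partialDeriv1 n j f * g + f * partialDeriv1 n j g := by
  rw [partialDeriv1_eq_fderiv hf, partialDeriv1_eq_fderiv hg, partialDeriv1_eq_fderiv (hf.mul hg)]
  funext x
  simp only [fderiv_mul (hf x) (hg x), add_apply, smul_apply, smul_eq_mul, Pi.add_apply,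
    Pi.mul_apply]
  ring

lemma partialDeriv1_sum {ι : Type*} (s : Finset ι) {G : ι → (Fin n → ℝ) → ℂ}
    (hG : ∀ i ∈ s, Differentiable ℝ (G i)) (j : Fin n) :
    partialDeriv1 n j (∑ i ∈ s, G i) = ∑ i ∈ s, partialDeriv1 n j (G i) := by
  rw [partialDeriv1_eq_fderiv (Differentiable.sum hG)]
  funext x
  rw [fderiv_sum fun i hi => hG i hi x, Finset.sum_apply, sum_apply]
  exact Finset.sum_congr rfl fun i hi => by rw [partialDeriv1_eq_fderiv (hG i hi)]

lemma partialDeriv1_coordFun (j k : Fin n) :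
    partialDeriv1 n k (coordFun j) = fun _ => if k = j then 1 else 0 := by
  have hlin : coordFun j
      = Complex.ofRealCLM.comp (ContinuousLinearMap.proj (R := ℝ) (φ := fun _ : Fin n => ℝ) j) :=
    rfl
  rw [partialDeriv1_eq_fderiv (differentiable_coordFun j), hlin]
  funext x
  split_ifs <;> simp [*]

lemma partialDeriv1_coordFun_mul (hg : Differentiable ℝ g) (j k : Fin n) :
    partialDeriv1 n k (coordFun j * g)
      = (if k = j then 1 else 0 : ℂ) • g + coordFun j * partialDeriv1 n k g := by
  rw [partialDeriv1_mul (differentiable_coordFun j) hg, partialDeriv1_coordFun]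
  funext x
  simp [ite_apply]

lemma hamOp_eq :
    hamOp n g = (1 / 2 : ℂ) • ∑ k,
      (partialDeriv1 n k (partialDeriv1 n k g) - coordFun k * (coordFun k * g)) := by
  funext x
  simp [hamOp, partialDeriv2_eq, Finset.sum_apply, sq, mul_assoc]

lemma hamOp_add (hf : ContDiff ℝ 2 f) (hg : ContDiff ℝ 2 g) :
    hamOp n (f + g) = hamOp n f + hamOp n g := by
  have hf1 := hf.differentiable two_ne_zero
  have hg1 := hg.differentiable two_ne_zero
  have hf2 k := differentiable_partialDeriv1 hf k
  have hg2 k := differentiable_partialDeriv1 hg k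
  simp only [hamOp_eq, partialDeriv1_add hf1 hg1, partialDeriv1_add (hf2 _) (hg2 _), ← smul_add,
    ← Finset.sum_add_distrib]
  congr 1
  exact Finset.sum_congr rfl fun k _ => by ring

lemma hamOp_const_smul (hg : ContDiff ℝ 2 g) (c : ℂ) : hamOp n (c • g) = c • hamOp n g := by
  have hg1 := hg.differentiable two_ne_zero
  have hg2 k := differentiable_partialDeriv1 hg k
  simp only [hamOp_eq, partialDeriv1_const_smul hg1, partialDeriv1_const_smul (hg2 _)]
  funext x
  simp only [Pi.smul_apply, Finset.sum_apply, Pi.sub_apply, Pi.mul_apply, smul_eq_mul,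
    Finset.mul_sum]
  exact Finset.sum_congr rfl fun k _ => by ring

lemma hamOp_zero : hamOp n 0 = 0 := by
  funext x
  simp [hamOp, partialDeriv2]

lemma hamOp_sum {ι : Type*} (s : Finset ι) {G : ι → (Fin n → ℝ) → ℂ}
    (hG : ∀ i ∈ s, ContDiff ℝ 2 (G i)) : hamOp n (∑ i ∈ s, G i) = ∑ i ∈ s, hamOp n (G i) := by
  classical
  induction s using Finset.induction_on with
  | empty => simp [hamOp_zero]
  | insert i s hi ih =>
    rw [Finset.forall_mem_insert] at hG
    rw [Finset.sum_insert hi, Finset.sum_insert hi,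
      hamOp_add hG.1 (Finset.sum_fn s G ▸ ContDiff.sum hG.2), ih hG.2]

lemma hamOp_coordFun_mul (hg : ContDiff ℝ 2 g) (j : Fin n) :
    hamOp n (coordFun j * g) = coordFun j * hamOp n g + partialDeriv1 n j g := by
  have hg1 := hg.differentiable two_ne_zero
  have hg2 k := differentiable_partialDeriv1 hg k
  have hsummand : ∀ k, partialDeriv1 n k (partialDeriv1 n k (coordFun j * g))
        - coordFun k * (coordFun k * (coordFun j * g))
      = (if k = j then (2 : ℂ) • partialDeriv1 n j g else 0)
        + coordFun j
          * (partialDeriv1 n k (partialDeriv1 n k g) - coordFun k * (coordFun k * g)) := by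
    intro k
    rw [partialDeriv1_coordFun_mul hg1, partialDeriv1_add (hg1.const_smul _)
      ((differentiable_coordFun j).mul (hg2 k)), partialDeriv1_const_smul hg1,
      partialDeriv1_coordFun_mul (hg2 k)]
    funext x
    split_ifs with hkj <;>
      simp only [hkj, one_smul, zero_smul, zero_add, Pi.add_apply, Pi.sub_apply,
        Pi.mul_apply, Pi.smul_apply, Pi.zero_apply, coordFun_apply, smul_eq_mul] <;>
      ring
  simp only [hamOp_eq, hsummand, Finset.sum_add_distrib, Finset.sum_ite_eq', Finset.mem_univ,
    if_true, ← Finset.mul_sum]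
  funext x
  simp only [one_div, Pi.smul_apply, Pi.add_apply, Pi.sub_apply, Pi.mul_apply, Finset.sum_apply,
    coordFun_apply, smul_eq_mul]
  ring

lemma hamOp_partialDeriv1 (hg : ContDiff ℝ 3 g) (j : Fin n) :
    hamOp n (partialDeriv1 n j g) = partialDeriv1 n j (hamOp n g) + coordFun j * g := by
  have hg1 := hg.differentiable (by norm_num)
  have hd k : ContDiff ℝ 2 (partialDeriv1 n k g) := contDiff_partialDeriv1 hg (by norm_num) k
  have hdd k : Differentiable ℝ (partialDeriv1 n k (partialDeriv1 n k g)) :=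
    differentiable_partialDeriv1 (hd k) k
  have hX k : Differentiable ℝ (coordFun k * g) := (differentiable_coordFun k).mul hg1
  have hthird k : partialDeriv1 n j (partialDeriv1 n k (partialDeriv1 n k g))
      = partialDeriv1 n k (partialDeriv1 n k (partialDeriv1 n j g)) := by
    rw [partialDeriv1_comm (hd k), partialDeriv1_comm (hg.of_le (by norm_num)) j k]
  have hsummand : ∀ k, partialDeriv1 n j
        (partialDeriv1 n k (partialDeriv1 n k g) - coordFun k * (coordFun k * g))
      = (partialDeriv1 n k (partialDeriv1 n k (partialDeriv1 n j g))
          - coordFun k * (coordFun k * partialDeriv1 n j g))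
        - (if j = k then (2 : ℂ) • (coordFun j * g) else 0) := by
    intro k
    rw [partialDeriv1_sub (hdd k) ((differentiable_coordFun k).mul (hX k)), hthird,
      partialDeriv1_coordFun_mul (hX k), partialDeriv1_coordFun_mul hg1]
    funext x
    by_cases hkj : j = k <;>
      simp only [hkj, ↓reduceIte, one_smul, zero_smul, zero_add, sub_zero, Pi.add_apply,
        Pi.sub_apply, Pi.mul_apply, Pi.smul_apply, Pi.zero_apply, coordFun_apply, smul_eq_mul]
    ring
  have hS k : Differentiable ℝ
      (partialDeriv1 n k (partialDeriv1 n k g) - coordFun k * (coordFun k * g)) :=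
    (hdd k).sub ((differentiable_coordFun k).mul (hX k))
  rw [hamOp_eq, hamOp_eq, partialDeriv1_const_smul (Differentiable.sum fun k _ => hS k),
    partialDeriv1_sum _ fun k _ => hS k]
  simp only [hsummand, Finset.sum_sub_distrib, Finset.sum_ite_eq, Finset.mem_univ, if_true]
  funext x
  simp only [one_div, Pi.smul_apply, Pi.add_apply, Pi.sub_apply, Pi.mul_apply, Finset.sum_apply,
    coordFun_apply, smul_eq_mul]
  ring

lemma sclMul_eq_sum (v : (Fin n → ℝ) × (Fin n → ℝ)) :
    sclMul n v g
      = ∑ j, ((Complex.I * v.1 j) • (coordFun j * g) + (v.2 j : ℂ) • partialDeriv1 n j g) := by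
  funext x
  simp [sclMul, Finset.sum_apply, Finset.sum_add_distrib, Finset.mul_sum, Finset.sum_mul, mul_assoc]

theorem hamOp_sclMul (hg : ContDiff ℝ 3 g) (v : (Fin n → ℝ) × (Fin n → ℝ)) :
    hamOp n (sclMul n v g) = sclMul n v (hamOp n g) + Complex.I • sclMul n (J0 n v) g := by
  have hg2 : ContDiff ℝ 2 g := hg.of_le (by norm_num)
  have hX j : ContDiff ℝ 2 (coordFun j * g) := (contDiff_coordFun j).mul hg2
  have hd j : ContDiff ℝ 2 (partialDeriv1 n j g) := contDiff_partialDeriv1 hg (by norm_num) j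
  have hXs j : ContDiff ℝ 2 ((Complex.I * v.1 j) • (coordFun j * g)) :=
    (hX j).const_smul (Complex.I * v.1 j)
  have hds j : ContDiff ℝ 2 ((v.2 j : ℂ) • partialDeriv1 n j g) := (hd j).const_smul (v.2 j : ℂ)
  have hsummand j : ContDiff ℝ 2
      ((Complex.I * v.1 j) • (coordFun j * g) + (v.2 j : ℂ) • partialDeriv1 n j g) :=
    (hXs j).add (hds j)
  have hterm j :
      hamOp n ((Complex.I * v.1 j) • (coordFun j * g) + (v.2 j : ℂ) • partialDeriv1 n j g)
      = (Complex.I * v.1 j) • (coordFun j * hamOp n g + partialDeriv1 n j g)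
        + (v.2 j : ℂ) • (partialDeriv1 n j (hamOp n g) + coordFun j * g) := by
    rw [hamOp_add (hXs j) (hds j), hamOp_const_smul (hX j),
      hamOp_const_smul (hd j), hamOp_coordFun_mul hg2, hamOp_partialDeriv1 hg]
  rw [sclMul_eq_sum, hamOp_sum _ fun j _ => hsummand j, Finset.sum_congr rfl fun j _ => hterm j,
    sclMul_eq_sum, sclMul_eq_sum]
  funext x
  simp only [J0, Finset.sum_apply, Pi.add_apply, Pi.smul_apply, Pi.mul_apply, coordFun_apply,
    smul_eq_mul, Complex.ofReal_neg, Finset.mul_sum, ← Finset.sum_add_distrib]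
  refine Finset.sum_congr rfl fun j _ => ?_
  linear_combination (v.2 j * (x j * g x) : ℂ) * Complex.I_mul_I

theorem hamOp_sclMul_commutator_general (n : ℕ) (f : SchwartzMap (Fin n → ℝ) ℂ)
    (v : (Fin n → ℝ) × (Fin n → ℝ)) (x : Fin n → ℝ) :
    hamOp n (sclMul n v ⇑f) x
      = sclMul n v (hamOp n ⇑f) x + Complex.I * sclMul n (J0 n v) ⇑f x :=
  congrFun (hamOp_sclMul (f.smooth 3) v) x

/-- `H₀(σ(v)f) = σ(v)(H₀ f) + i σ(J₀ v) f`. -/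
theorem hamOp_sclMul_commutator (n : ℕ) (hn : 1 ≤ n) (f : SchwartzMap (Fin n → ℝ) ℂ)
    (v : (Fin n → ℝ) × (Fin n → ℝ)) (x : Fin n → ℝ) :
    hamOp n (sclMul n v ⇑f) x
      = sclMul n v (hamOp n ⇑f) x + Complex.I * sclMul n (J0 n v) ⇑f x :=
  hamOp_sclMul_commutator_general n f v x
end
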